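/- Let ω = e^{2πi/3} ∈ ℂ, α = 2 + 3ω, and let L ⊂ ℂ^7 be the lattice L = { x/α : x ∈ ℤ[ω]^7, x_1 ≡ x_2 ≡ ⋯ ≡ x_7 (mod α) in ℤ[ω], and x_1 + ⋯ + x_7 = 0 }, equipped with the real inner product ⟨y, z⟩ = 2 Re(Σ_{j=1}^7 y_j · conj(z_j)). Then there exists a subset T ⊆ L with exactly 28 elements such that T = −T, every t ∈ T satisfies ⟨t, t⟩ = 6, and for all s, t ∈ T with s ≠ t and s ≠ −t one has |⟨s, t⟩| ≤ 1. -/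
import Mathlib


open scoped Pointwise

/-- The primitive cube root of unity `ω = e^{2πi/3}`. -/
noncomputable def eisOmega : ℂ := Complex.exp (2 * (Real.pi : ℂ) * Complex.I / 3)

/-- `α = 2 + 3ω`, a prime of norm 7 in the Eisenstein integers. -/
noncomputable def eisAlpha : ℂ := 2 + 3 * eisOmega

/-- The ring of Eisenstein integers `ℤ[ω] = {a + bω : a, b ∈ ℤ}` as a subset of `ℂ`. -/
def EisensteinInts : Set ℂ := { z | ∃ a b : ℤ, z = (a : ℂ) + (b : ℂ) * eisOmega }

/-- The lattice `L = (1/α){x ∈ ℤ[ω]⁷ : x₁ ≡ ⋯ ≡ x₇ (mod α), ∑ xⱼ = 0}`, a copy of the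
Coxeter–Todd lattice `K₁₂`. -/
noncomputable def K12Lattice : Set (Fin 7 → ℂ) :=
  { y | ∃ x : Fin 7 → ℂ, (∀ j, x j ∈ EisensteinInts) ∧
      (∀ j k, (x j - x k) / eisAlpha ∈ EisensteinInts) ∧
      (∑ j, x j) = 0 ∧ y = fun j => x j / eisAlpha }

/-- The real inner product `⟨y, z⟩ = 2 Re ∑ yⱼ conj(zⱼ)` on `ℂ⁷`. -/
noncomputable def eisInner (y z : Fin 7 → ℂ) : ℝ :=
  2 * (∑ j, y j * (starRingEnd ℂ) (z j)).re

/-! ### Auxiliary facts about `ω` -/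

lemma eisOmega_eq : eisOmega = Complex.exp ((2 * Real.pi / 3 : ℝ) * Complex.I) := by
  unfold eisOmega
  congr 1
  push_cast
  ring

lemma eisOmega_re : eisOmega.re = -(1/2) := by
  rw [eisOmega_eq, Complex.exp_ofReal_mul_I_re]
  have : (2 * Real.pi / 3 : ℝ) = Real.pi - Real.pi / 3 := by ring
  rw [this, Real.cos_pi_sub, Real.cos_pi_div_three]

lemma eisOmega_im : eisOmega.im = Real.sqrt 3 / 2 := by
  rw [eisOmega_eq, Complex.exp_ofReal_mul_I_im]
  have : (2 * Real.pi / 3 : ℝ) = Real.pi - Real.pi / 3 := by ring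
  rw [this, Real.sin_pi_sub, Real.sin_pi_div_three]

lemma eisOmega_im_ne : eisOmega.im ≠ 0 := by
  rw [eisOmega_im]
  positivity

lemma eisOmega_conj : (starRingEnd ℂ) eisOmega = -1 - eisOmega := by
  apply Complex.ext
  · simp [eisOmega_re]; norm_num
  · simp [eisOmega_im]

lemma eisOmega_sq : eisOmega ^ 2 + eisOmega + 1 = 0 := by
  have h1 : eisOmega * (starRingEnd ℂ) eisOmega = (Complex.normSq eisOmega : ℂ) :=
    Complex.mul_conj eisOmega
  have h2 : Complex.normSq eisOmega = 1 := by
    rw [Complex.normSq_apply, eisOmega_re, eisOmega_im]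
    have : Real.sqrt 3 ^ 2 = 3 := Real.sq_sqrt (by norm_num)
    nlinarith [this]
  rw [eisOmega_conj, h2] at h1
  push_cast at h1
  linear_combination -h1

lemma eisAlpha_ne : eisAlpha ≠ 0 := by
  intro h
  have := congrArg Complex.re h
  simp [eisAlpha, eisOmega_re] at this
  norm_num at this

/-! ### The embedding of integer pairs -/

noncomputable def emb (p : ℤ × ℤ) : ℂ := (p.1 : ℂ) + (p.2 : ℂ) * eisOmega

lemma em_inj {p q : ℤ × ℤ} (h : emb p = emb q) : p = q := by
  have him := congrArg Complex.im h
  have hre := congrArg Complex.re h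
  simp only [emb, Complex.add_im, Complex.intCast_im, Complex.mul_im, Complex.intCast_re,
    Complex.add_re, Complex.mul_re] at him hre
  have h2 : (p.2 : ℝ) = q.2 := by
    have hne := eisOmega_im_ne
    have h2' : (p.2 : ℝ) * eisOmega.im = (q.2 : ℝ) * eisOmega.im := by linarith
    exact mul_right_cancel₀ hne h2'
  have hp2 : p.2 = q.2 := by exact_mod_cast h2
  have h1 : (p.1 : ℝ) = q.1 := by
    rw [h2] at hre
    linarith
  have hp1 : p.1 = q.1 := by exact_mod_cast h1
  exact Prod.ext hp1 hp2

lemma em_neg (p : ℤ × ℤ) : emb (-p) = -emb p := by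
  simp [emb]
  ring

lemma alpha_mul_em (p : ℤ × ℤ) : eisAlpha * emb p = emb (2 * p.1 - 3 * p.2, 3 * p.1 - p.2) := by
  simp only [emb, eisAlpha]
  push_cast
  linear_combination (3 * (p.2 : ℂ)) * eisOmega_sq

lemma em_sub (p q : ℤ × ℤ) : emb p - emb q = emb (p - q) := by
  simp [emb]
  ring

/-- Any `ℤ[ω]`-vector with zero sum lies in the lattice. -/
lemma mem_lattice (v : Fin 7 → ℤ × ℤ) (h : (∑ j, emb (v j)) = 0) :
    (fun j => emb (v j)) ∈ K12Lattice := by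
  refine ⟨fun j => eisAlpha * emb (v j), ?_, ?_, ?_, ?_⟩
  · intro j
    show eisAlpha * emb (v j) ∈ EisensteinInts
    rw [alpha_mul_em]
    exact ⟨_, _, rfl⟩
  · intro j k
    have : (eisAlpha * emb (v j) - eisAlpha * emb (v k)) / eisAlpha = emb (v j - v k) := by
      rw [← em_sub, ← mul_sub, mul_div_cancel_left₀ _ eisAlpha_ne]
    rw [this]
    exact ⟨_, _, rfl⟩
  · rw [← Finset.mul_sum, h, mul_zero]
  · funext j
    rw [mul_div_cancel_left₀ _ eisAlpha_ne]

/-- The bilinear integer form corresponding to `eisInner` on embedded vectors. -/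
def eisF (p q : ℤ × ℤ) : ℤ :=
  2 * p.1 * q.1 + 2 * p.2 * q.2 - p.1 * q.2 - p.2 * q.1

lemma term_re (p q : ℤ × ℤ) :
    2 * (emb p * (starRingEnd ℂ) (emb q)).re = ((eisF p q : ℤ) : ℝ) := by
  have hz : emb p * (starRingEnd ℂ) (emb q) =
      ((p.1 * q.1 - p.1 * q.2 + p.2 * q.2 : ℤ) : ℂ) +
      ((p.2 * q.1 - p.1 * q.2 : ℤ) : ℂ) * eisOmega := by
    simp only [emb, map_add, map_mul, map_intCast, eisOmega_conj]
    push_cast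
    linear_combination (-(p.2 : ℂ) * q.2) * eisOmega_sq
  rw [hz]
  simp only [Complex.add_re, Complex.intCast_re, Complex.mul_re, Complex.intCast_im,
    eisOmega_re]
  push_cast [eisF]
  ring

lemma inner_em (v w : Fin 7 → ℤ × ℤ) :
    eisInner (fun j => emb (v j)) (fun j => emb (w j)) = ((∑ j, eisF (v j) (w j) : ℤ) : ℝ) := by
  unfold eisInner
  rw [Complex.re_sum, Finset.mul_sum]
  push_cast
  refine Finset.sum_congr rfl fun j _ => ?_
  have := term_re (v j) (w j)
  push_cast at this
  exact this

/-! ### The explicit data -/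

def Vdat : Fin 28 → Fin 7 → ℤ × ℤ :=
  ![![(0, 0), (-1, -1), (0, 0), (0, 0), (1, 0), (0, 0), (0, 1)],
    ![(0, 1), (0, 0), (1, 0), (0, 0), (-1, -1), (0, 0), (0, 0)],
    ![(1, 0), (0, 1), (0, 0), (-1, -1), (0, 0), (0, 0), (0, 0)],
    ![(0, 0), (0, 0), (0, 0), (1, 0), (0, 0), (0, 1), (-1, -1)],
    ![(0, 0), (0, 0), (1, 0), (0, 0), (0, 1), (-1, -1), (0, 0)],
    ![(0, 0), (1, 0), (-1, -1), (0, 0), (0, 0), (0, 0), (0, 1)],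
    ![(0, 0), (0, 0), (0, 1), (1, 0), (0, 0), (-1, -1), (0, 0)],
    ![(0, 0), (-1, -1), (0, 0), (0, 0), (0, 1), (1, 0), (0, 0)],
    ![(-1, -1), (0, 0), (0, 0), (0, 0), (0, 0), (0, 1), (1, 0)],
    ![(-1, -1), (0, 1), (0, 0), (0, 0), (0, 0), (1, 0), (0, 0)],
    ![(0, 0), (1, 0), (0, 1), (-1, -1), (0, 0), (0, 0), (0, 0)],
    ![(0, 1), (0, 0), (-1, -1), (0, 0), (0, 0), (0, 0), (1, 0)],
    ![(0, 0), (0, 0), (0, 0), (0, 1), (1, 0), (0, 0), (-1, -1)],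
    ![(1, 0), (0, 0), (0, 0), (0, 1), (-1, -1), (0, 0), (0, 0)],
    ![(0, 0), (1, 1), (0, 0), (0, 0), (-1, 0), (0, 0), (0, -1)],
    ![(0, -1), (0, 0), (-1, 0), (0, 0), (1, 1), (0, 0), (0, 0)],
    ![(-1, 0), (0, -1), (0, 0), (1, 1), (0, 0), (0, 0), (0, 0)],
    ![(0, 0), (0, 0), (0, 0), (-1, 0), (0, 0), (0, -1), (1, 1)],
    ![(0, 0), (0, 0), (-1, 0), (0, 0), (0, -1), (1, 1), (0, 0)],
    ![(0, 0), (-1, 0), (1, 1), (0, 0), (0, 0), (0, 0), (0, -1)],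
    ![(0, 0), (0, 0), (0, -1), (-1, 0), (0, 0), (1, 1), (0, 0)],
    ![(0, 0), (1, 1), (0, 0), (0, 0), (0, -1), (-1, 0), (0, 0)],
    ![(1, 1), (0, 0), (0, 0), (0, 0), (0, 0), (0, -1), (-1, 0)],
    ![(1, 1), (0, -1), (0, 0), (0, 0), (0, 0), (-1, 0), (0, 0)],
    ![(0, 0), (-1, 0), (0, -1), (1, 1), (0, 0), (0, 0), (0, 0)],
    ![(0, -1), (0, 0), (1, 1), (0, 0), (0, 0), (0, 0), (-1, 0)],
    ![(0, 0), (0, 0), (0, 0), (0, -1), (-1, 0), (0, 0), (1, 1)],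
    ![(-1, 0), (0, 0), (0, 0), (0, -1), (1, 1), (0, 0), (0, 0)]]

def Gmat (i k : Fin 28) : ℤ := ∑ j, eisF (Vdat i j) (Vdat k j)

noncomputable def fvec (i : Fin 28) : Fin 7 → ℂ := fun j => emb (Vdat i j)

lemma Vdat_sum : ∀ i : Fin 28, (∑ j, (Vdat i j).1) = 0 ∧ (∑ j, (Vdat i j).2) = 0 := by decide

lemma Vdat_inj : ∀ i k : Fin 28, Vdat i = Vdat k → i = k := by decide

lemma Vdat_neg : ∀ i : Fin 28, ∀ j, Vdat (i + 14) j = -(Vdat i j) := by decide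

lemma Gmat_diag : ∀ i : Fin 28, Gmat i i = 6 := by decide

lemma Gmat_off : ∀ i k : Fin 28, Vdat i ≠ Vdat k → Vdat i ≠ (fun j => -(Vdat k j)) →
    |Gmat i k| ≤ 1 := by decide

lemma fvec_sum_zero (i : Fin 28) : (∑ j, emb (Vdat i j)) = 0 := by
  obtain ⟨h1, h2⟩ := Vdat_sum i
  have : (∑ j, emb (Vdat i j)) =
      ((∑ j, (Vdat i j).1 : ℤ) : ℂ) + ((∑ j, (Vdat i j).2 : ℤ) : ℂ) * eisOmega := by
    unfold emb
    rw [Finset.sum_add_distrib, ← Finset.sum_mul]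
    push_cast
    ring
  rw [this, h1, h2]
  simp

lemma fvec_neg (i : Fin 28) : fvec (i + 14) = -fvec i := by
  funext j
  simp only [fvec, Pi.neg_apply, Vdat_neg i j, em_neg]

lemma fvec_inj : Function.Injective fvec := by
  intro i k h
  apply Vdat_inj
  funext j
  exact em_inj (congrFun h j)

lemma fin28_invol : ∀ i : Fin 28, i + 14 + 14 = i := by decide

theorem statement12 :
    ∃ T : Set (Fin 7 → ℂ), T ⊆ K12Lattice ∧ T.ncard = 28 ∧ T = -T ∧
      (∀ t ∈ T, eisInner t t = 6) ∧
      (∀ s ∈ T, ∀ t ∈ T, s ≠ t → s ≠ -t → |eisInner s t| ≤ 1) := by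
  refine ⟨Set.range fvec, ?_, ?_, ?_, ?_, ?_⟩
  · rintro y ⟨i, rfl⟩
    exact mem_lattice (Vdat i) (fvec_sum_zero i)
  · rw [← Set.image_univ, Set.ncard_image_of_injective _ fvec_inj, Set.ncard_univ]
    simp
  · ext z
    simp only [Set.mem_neg, Set.mem_range]
    constructor
    · rintro ⟨i, rfl⟩
      exact ⟨i + 14, fvec_neg i⟩
    · rintro ⟨i, hi⟩
      refine ⟨i + 14, ?_⟩
      rw [fvec_neg, hi, neg_neg]
  · rintro t ⟨i, rfl⟩
    have : eisInner (fvec i) (fvec i) = ((Gmat i i : ℤ) : ℝ) := inner_em (Vdat i) (Vdat i)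
    rw [this, Gmat_diag i]
    norm_num
  · rintro s ⟨i, rfl⟩ t ⟨k, rfl⟩ hne hne'
    have h1 : Vdat i ≠ Vdat k := by
      intro h
      exact hne (by funext j; simp only [fvec, h])
    have h2 : Vdat i ≠ (fun j => -(Vdat k j)) := by
      intro h
      apply hne'
      funext j
      simp only [fvec, Pi.neg_apply, h, em_neg]
    have hG := Gmat_off i k h1 h2
    have : eisInner (fvec i) (fvec k) = ((Gmat i k : ℤ) : ℝ) := inner_em (Vdat i) (Vdat k)
    rw [this, ← Int.cast_abs]
    exact_mod_cast hG
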